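/- For integer r ≥ 1, the Fourier transform of the one-dimensional higher-order Gaussian kernel G_{2r}(x) = Q_{2r-2}(x)φ(x), where Q_{2r-2}(x) = Σ_{i=0}^{r-1} c_{2i} x^{2i} with c_{2i} = (-1)^i 2^{i-2r+1} (2r)! / (r! (2i+1)! (r-i-1)!), satisfies Ĝ_{2r}(λ) = ∫ e^{iλt} G_{2r}(t) dt = e^{-λ²/2} Σ_{s=0}^{r-1} λ^{2s}/(2^s s!). In particular, for the product kernel ψ^{2r}(x) = ∏_{j=1}^d G_{2r}(x_j) on ℝᵈ, its Fourier transform is e^{-‖λ‖²/2} ∏_{j=1}^d Σ_{s=0}^{r-1} λ_j^{2s}/(2^s s!). -/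

import Mathlib

/-!
Expanding the even Hermite polynomials `He_{2s} = hermite (2 * s)` in monomials, a telescoping
identity for the coefficients shows `Q_{2r-2} = ∑_{s<r} (-1)^s He_{2s} / (2^s s!)`. Since
`He_n φ = (-1)^n φ⁽ⁿ⁾`, this writes `G_{2r}` as a combination of the even derivatives of
`φ`. Integration by parts gives `∫ e^{iλt} φ⁽ⁿ⁾(t) dt = (-iλ)^n e^{-λ²/2}`, and the signs
`(-1)^s (-iλ)^{2s} = λ^{2s}` cancel. The product kernel follows by Fubini.
-/

open MeasureTheory Real Complex

/-- Coefficients of the higher-order Gaussian kernel. -/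
noncomputable def cCoef (r i : ℕ) : ℝ :=
  (-1) ^ i * (2:ℝ) ^ ((i : ℤ) - 2 * (r : ℤ) + 1) * (Nat.factorial (2 * r)) /
    ((Nat.factorial r) * (Nat.factorial (2 * i + 1)) * (Nat.factorial (r - i - 1)))

/-- The polynomial Q_{2r-2}. -/
noncomputable def Qpoly (r : ℕ) (x : ℝ) : ℝ := ∑ i ∈ Finset.range r, cCoef r i * x ^ (2 * i)

/-- The 2r-order Gaussian-based kernel G_{2r}. -/
noncomputable def G2r (r : ℕ) (x : ℝ) : ℝ :=
  Qpoly r x * ((2 * π)⁻¹.sqrt * Real.exp (-x ^ 2 / 2))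

open Polynomial Nat Finset
open scoped ContDiff

local notation "γ" => fun y : ℝ => Real.exp (-(y ^ 2 / 2))

theorem doubleFactorial_two_mul_sub_one_mul (k : ℕ) :
    (2 * k - 1)‼ * (2 ^ k * k !) = (2 * k)! := by
  cases k with
  | zero => rfl
  | succ k =>
    rw [← doubleFactorial_two_mul, show 2 * (k + 1) = 2 * k + 1 + 1 by ring,
      factorial_eq_mul_doubleFactorial, Nat.add_sub_cancel, mul_comm]

theorem coeff_hermite_two_mul_add (i k : ℕ) :
    ((hermite (2 * (i + k))).coeff (2 * i) : ℝ) =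
      (-1) ^ k * (2 * (i + k))! / (2 ^ k * k ! * (2 * i)!) := by
  have hfac : ((2 * k - 1)‼ : ℝ) * (2 ^ k * k !) = (2 * k)! := by
    exact_mod_cast doubleFactorial_two_mul_sub_one_mul k
  rw [show 2 * (i + k) = 2 * k + 2 * i by ring, coeff_hermite_explicit]
  push_cast
  rw [Nat.cast_choose ℝ (by omega), Nat.add_sub_cancel, ← hfac]
  field_simp

theorem aeval_hermite_two_mul (s : ℕ) (x : ℝ) :
    aeval x (hermite (2 * s)) =
      ∑ i ∈ range (s + 1), ((hermite (2 * s)).coeff (2 * i) : ℝ) * x ^ (2 * i) := by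
  rw [aeval_eq_sum_range, natDegree_hermite]
  calc ∑ k ∈ range (2 * s + 1), (hermite (2 * s)).coeff k • x ^ k
      = ∑ k ∈ (range (s + 1)).image (2 * ·), (hermite (2 * s)).coeff k • x ^ k := by
        refine (sum_subset (fun k hk => ?_) (fun k hk hk' => ?_)).symm
        · simp only [mem_image, mem_range] at hk ⊢
          omega
        · simp only [mem_image, mem_range, not_exists, not_and] at hk hk'
          rw [coeff_hermite_of_odd_add, zero_smul]
          rcases Nat.even_or_odd k with ⟨j, rfl⟩ | hodd
          · exact (hk' j (by omega) (by ring)).elim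
          · exact Even.add_odd (even_two_mul s) hodd
    _ = _ := by
        rw [sum_image fun a _ b _ h => by simpa using h]
        simp only [zsmul_eq_mul]

theorem cCoef_add_one_add (i m : ℕ) :
    cCoef (i + 1 + m) i = (-1) ^ i * (2 * (i + 1 + m))! /
      (2 ^ (i + 2 * m + 1) * (i + 1 + m)! * (2 * i + 1)! * m !) := by
  rw [cCoef, show (i : ℤ) - 2 * ((i + 1 + m : ℕ) : ℤ) + 1 = -((i + 2 * m + 1 : ℕ) : ℤ) by
      push_cast; ring,
    zpow_neg, zpow_natCast, show i + 1 + m - i - 1 = m by omega]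
  field_simp

theorem sum_range_factorial_div (i m : ℕ) :
    ∑ k ∈ range (m + 1),
        ((2 * (i + k))! : ℝ) / (2 ^ (i + k) * (i + k)! * (2 ^ k * k ! * (2 * i)!)) =
      (2 * (i + 1 + m))! / (2 ^ (i + 2 * m + 1) * (i + 1 + m)! * (2 * i + 1)! * m !) := by
  induction m with
  | zero =>
    rw [sum_range_one, show 2 * (i + 1 + 0) = 2 * i + 1 + 1 by ring, factorial_succ (2 * i + 1),
      factorial_succ (2 * i), add_zero, add_zero, factorial_succ i]
    push_cast
    field_simp
    ring
  | succ m ih =>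
    rw [sum_range_succ, ih, show 2 * (i + 1 + (m + 1)) = 2 * (i + 1 + m) + 1 + 1 by ring,
      show i + (m + 1) = i + 1 + m by ring, show i + 1 + (m + 1) = i + 1 + m + 1 by ring,
      factorial_succ (2 * (i + 1 + m) + 1), factorial_succ (2 * (i + 1 + m)),
      factorial_succ (i + 1 + m), factorial_succ m, factorial_succ (2 * i)]
    push_cast
    field_simp
    ring

theorem sum_Ico_hermite_coeff_eq_cCoef {i r : ℕ} (hi : i < r) :
    ∑ s ∈ Ico i r, (-1) ^ s / (2 ^ s * s !) * ((hermite (2 * s)).coeff (2 * i) : ℝ) =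
      cCoef r i := by
  obtain ⟨m, rfl⟩ : ∃ m, r = i + 1 + m := ⟨r - i - 1, by omega⟩
  rw [sum_Ico_eq_sum_range, show i + 1 + m - i = m + 1 by omega, cCoef_add_one_add,
    mul_div_assoc, ← sum_range_factorial_div, mul_sum]
  refine sum_congr rfl fun k _ => ?_
  rw [coeff_hermite_two_mul_add, pow_add]
  field_simp
  rw [← pow_mul, Even.neg_one_pow ⟨k, by ring⟩]

theorem Qpoly_eq_sum_hermite (r : ℕ) (x : ℝ) :
    Qpoly r x = ∑ s ∈ range r, (-1) ^ s / (2 ^ s * s !) * aeval x (hermite (2 * s)) := by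
  simp only [aeval_hermite_two_mul, mul_sum, range_eq_Ico]
  rw [← sum_Ico_Ico_comm, Qpoly, range_eq_Ico]
  refine sum_congr rfl fun i hi => ?_
  rw [← sum_Ico_hermite_coeff_eq_cCoef (mem_Ico.mp hi).2, sum_mul]
  exact sum_congr rfl fun s _ => by ring

theorem G2r_eq_sum_iterate_deriv_gaussian (r : ℕ) (x : ℝ) :
    G2r r x = ∑ s ∈ range r, (-1) ^ s / (2 ^ s * s !) * (2 * π)⁻¹.sqrt *
      deriv^[2 * s] γ x := by
  rw [G2r, Qpoly_eq_sum_hermite, sum_mul]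
  refine sum_congr rfl fun s _ => ?_
  rw [deriv_gaussian_eq_hermite_mul_gaussian, pow_mul, neg_one_sq, one_pow, neg_div]
  ring

theorem integrable_cexp_I_mul_mul {g : ℝ → ℂ} (hg : Integrable g) (lam : ℝ) :
    Integrable fun t : ℝ => cexp (I * lam * t) * g t := by
  refine hg.bdd_mul (c := 1) (by fun_prop) (ae_of_all _ fun t => ?_)
  rw [show I * lam * t = ((lam * t : ℝ) : ℂ) * I by push_cast; ring, norm_exp_ofReal_mul_I]

theorem integral_cexp_I_mul_mul_deriv {f f' : ℝ → ℂ} (hf : ∀ t, HasDerivAt f (f' t) t)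
    (hfi : Integrable f) (hf'i : Integrable f') (lam : ℝ) :
    ∫ t : ℝ, cexp (I * lam * t) * f' t =
      -(I * lam) * ∫ t : ℝ, cexp (I * lam * t) * f t := by
  have hexp (t : ℝ) :
      HasDerivAt (fun u : ℝ => cexp (I * lam * u)) (I * lam * cexp (I * lam * t)) t := by
    simpa [mul_comm] using ((hasDerivAt_id (t : ℂ)).const_mul (I * lam)).cexp.comp_ofReal
  have hparts := integral_mul_deriv_eq_deriv_mul_of_integrable (fun t _ => hexp t)
    (fun t _ => hf t) (integrable_cexp_I_mul_mul hf'i lam)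
    (by simpa only [Pi.mul_def, mul_assoc] using
      (integrable_cexp_I_mul_mul hfi lam).const_mul (I * lam))
    (integrable_cexp_I_mul_mul hfi lam)
  simpa only [mul_assoc, integral_const_mul, neg_mul] using hparts

theorem integrable_aeval_mul_exp_neg_sq_div_two {R : Type*} [CommSemiring R] [Algebra R ℝ]
    (p : R[X]) : Integrable fun x : ℝ => aeval x p * Real.exp (-(x ^ 2 / 2)) := by
  simp only [aeval_eq_sum_range, sum_mul]
  refine integrable_finsetSum _ fun k _ => ?_
  refine ((integrable_rpow_mul_exp_neg_mul_sq (b := 1 / 2) (by norm_num) (s := k)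
    (by linarith [k.cast_nonneg (α := ℝ)])).const_mul (algebraMap R ℝ (p.coeff k))).congr
    (ae_of_all _ fun x => ?_)
  simp only [rpow_natCast, Algebra.smul_def]
  ring_nf

theorem integrable_iterate_deriv_gaussian (n : ℕ) : Integrable (deriv^[n] γ) := by
  refine ((integrable_aeval_mul_exp_neg_sq_div_two (hermite n)).const_mul ((-1 : ℝ) ^ n)).congr
    (ae_of_all _ fun x => ?_)
  simp only [deriv_gaussian_eq_hermite_mul_gaussian, mul_assoc]

theorem hasDerivAt_iterate_deriv_gaussian (n : ℕ) (x : ℝ) :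
    HasDerivAt (deriv^[n] γ) (deriv^[n + 1] γ x) x := by
  have hγ : ContDiff ℝ ∞ γ := by fun_prop
  rw [Function.iterate_succ_apply']
  exact ((hγ.iterate_deriv n).differentiable (by simp)).differentiableAt.hasDerivAt

theorem integral_cexp_I_mul_mul_gaussian (lam : ℝ) :
    ∫ t : ℝ, cexp (I * lam * t) * (Real.exp (-(t ^ 2 / 2)) : ℂ) =
      (√(2 * π) * Real.exp (-(lam ^ 2 / 2)) : ℝ) := by
  have hγ (t : ℝ) : ((Real.exp (-(t ^ 2 / 2)) : ℝ) : ℂ) = cexp (-(1 / 2) * t ^ 2) := by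
    push_cast; ring_nf
  simp only [hγ]
  rw [fourierIntegral_gaussian (by norm_num), ofReal_mul, ofReal_exp, sqrt_eq_rpow,
    ofReal_cpow (by positivity)]
  push_cast
  ring_nf

theorem integral_cexp_I_mul_mul_iterate_deriv_gaussian (n : ℕ) (lam : ℝ) :
    ∫ t : ℝ, cexp (I * lam * t) * ((deriv^[n] γ t : ℝ) : ℂ) =
      (-(I * lam)) ^ n * (√(2 * π) * Real.exp (-(lam ^ 2 / 2)) : ℝ) := by
  induction n with
  | zero => simpa using integral_cexp_I_mul_mul_gaussian lam
  | succ n ih =>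
    rw [integral_cexp_I_mul_mul_deriv
      (fun t => (hasDerivAt_iterate_deriv_gaussian n t).ofReal_comp)
      (integrable_iterate_deriv_gaussian n).ofReal
      (integrable_iterate_deriv_gaussian (n + 1)).ofReal, ih, pow_succ]
    ring

theorem integral_cexp_I_mul_mul_G2r (r : ℕ) (lam : ℝ) :
    ∫ t : ℝ, cexp (I * lam * t) * (G2r r t : ℂ) =
      (Real.exp (-lam ^ 2 / 2) * ∑ s ∈ range r, lam ^ (2 * s) / (2 ^ s * s !) : ℝ) := by
  set c : ℕ → ℝ := fun s => (-1) ^ s / (2 ^ s * s !) * (2 * π)⁻¹.sqrt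
  have hpow (s : ℕ) : (-(I * lam)) ^ (2 * s) = (((-1) ^ s * lam ^ (2 * s) : ℝ) : ℂ) := by
    push_cast
    rw [pow_mul, neg_sq, mul_pow, I_sq, mul_pow, ← pow_mul]
  calc ∫ t : ℝ, cexp (I * lam * t) * (G2r r t : ℂ)
      = ∫ t : ℝ, ∑ s ∈ range r, (c s : ℂ) *
          (cexp (I * lam * t) * ((deriv^[2 * s] γ t : ℝ) : ℂ)) := by
        simp only [G2r_eq_sum_iterate_deriv_gaussian, ofReal_sum, mul_sum, ofReal_mul, c]
        exact integral_congr_ae (ae_of_all _ fun t => sum_congr rfl fun s _ => by ring)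
    _ = ∑ s ∈ range r,
          (c s : ℂ) * ((-(I * lam)) ^ (2 * s) *
            (√(2 * π) * Real.exp (-(lam ^ 2 / 2)) : ℝ)) := by
        rw [integral_finsetSum _ fun s _ => ?_]
        · simp only [integral_const_mul, integral_cexp_I_mul_mul_iterate_deriv_gaussian]
        · exact (integrable_cexp_I_mul_mul (integrable_iterate_deriv_gaussian (2 * s)).ofReal
            lam).const_mul _
    _ = _ := by
        simp only [hpow, ← ofReal_mul, ← ofReal_sum, mul_sum]
        congr 1
        refine sum_congr rfl fun s _ => ?_
        have hsign : ((-1 : ℝ) ^ s) * (-1) ^ s = 1 := by rw [← mul_pow]; norm_num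
        have hsqrt : (2 * π)⁻¹.sqrt * √(2 * π) = 1 := by
          rw [Real.sqrt_inv, inv_mul_cancel₀ (by positivity)]
        simp only [c, neg_div]
        linear_combination (Real.exp (-(lam ^ 2 / 2)) * (lam ^ (2 * s) / (2 ^ s * s !))) *
          ((-1) ^ s * (-1) ^ s * hsqrt + hsign)

theorem integral_cexp_I_mul_sum_mul_prod {ι : Type*} [Fintype ι] (f : ℝ → ℂ)
    (lam : ι → ℝ) :
    ∫ t : ι → ℝ, cexp (I * ∑ j, lam j * t j) * ∏ j, f (t j) =
      ∏ j, ∫ x : ℝ, cexp (I * lam j * x) * f x := by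
  rw [← integral_fintype_prod_volume_eq_prod]
  congr with t
  push_cast
  rw [mul_sum, Complex.exp_sum, ← prod_mul_distrib]
  simp only [mul_assoc]

theorem stmt_4_general (r : ℕ) :
    (∀ lam : ℝ,
      (∫ t : ℝ, Complex.exp (Complex.I * lam * t) * (G2r r t : ℂ)) =
        (Real.exp (-lam ^ 2 / 2) * ∑ s ∈ Finset.range r,
          lam ^ (2 * s) / (2 ^ s * Nat.factorial s) : ℝ)) ∧
    (∀ d : ℕ, 1 ≤ d → ∀ lam : Fin d → ℝ,
      (∫ t : Fin d → ℝ,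
          Complex.exp (Complex.I * (∑ j, lam j * t j)) * ((∏ j, G2r r (t j) : ℝ) : ℂ)) =
        (Real.exp (-(∑ j, (lam j) ^ 2) / 2) * ∏ j, ∑ s ∈ Finset.range r,
          (lam j) ^ (2 * s) / (2 ^ s * Nat.factorial s) : ℝ)) := by
  refine ⟨integral_cexp_I_mul_mul_G2r r, fun d _ lam => ?_⟩
  simp only [ofReal_prod]
  rw [integral_cexp_I_mul_sum_mul_prod (fun x => (G2r r x : ℂ))]
  simp only [integral_cexp_I_mul_mul_G2r, ← ofReal_prod, prod_mul_distrib, ← Real.exp_sum,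
    sum_div, ← sum_neg_distrib, neg_div]

/-- Fourier transform identity for G_{2r}, in one dimension and for
the d-dimensional product kernel. -/
theorem stmt_4 (r : ℕ) (hr : 1 ≤ r) :
    (∀ lam : ℝ,
      (∫ t : ℝ, Complex.exp (Complex.I * lam * t) * (G2r r t : ℂ)) =
        (Real.exp (-lam ^ 2 / 2) * ∑ s ∈ Finset.range r,
          lam ^ (2 * s) / (2 ^ s * Nat.factorial s) : ℝ)) ∧
    (∀ d : ℕ, 1 ≤ d → ∀ lam : Fin d → ℝ,
      (∫ t : Fin d → ℝ,
          Complex.exp (Complex.I * (∑ j, lam j * t j)) * ((∏ j, G2r r (t j) : ℝ) : ℂ)) =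
        (Real.exp (-(∑ j, (lam j) ^ 2) / 2) * ∏ j, ∑ s ∈ Finset.range r,
          (lam j) ^ (2 * s) / (2 ^ s * Nat.factorial s) : ℝ)) :=
  stmt_4_general r
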